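/- arXiv:1309.7701 — 5 statements merged into one kernel-verified Lean document; each statement's English description precedes it below -/
import Mathlib

section
/- The geometric operator mean (A,B) ↦ A#B = A^{1/2}(A^{-1/2} B A^{-1/2})^{1/2} A^{1/2}, defined on pairs of positive definite n×n complex matrices, is jointly concave: for all positive definite n×n matrices A₁, A₂, B₁, B₂ and all λ ∈ [0,1], (λA₁ + (1−λ)A₂) # (λB₁ + (1−λ)B₂) ≥ λ (A₁#B₁) + (1−λ)(A₂#B₂) in the Loewner order. -/
open scoped ComplexOrder

/-- The geometric operator mean `A # B = A^{1/2} (A^{-1/2} B A^{-1/2})^{1/2} A^{1/2}`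
of positive definite complex matrices, via the functional calculus for Hermitian
matrices. -/
noncomputable def Matrix.geomMean {n : ℕ} (A B : Matrix (Fin n) (Fin n) ℂ) :
    Matrix (Fin n) (Fin n) ℂ :=
  cfc Real.sqrt A *
    cfc Real.sqrt (cfc (fun t => (Real.sqrt t)⁻¹) A * B * cfc (fun t => (Real.sqrt t)⁻¹) A) *
    cfc Real.sqrt A

/-!
`A # B` is the largest Hermitian `X` for which the block matrix `[[A, X], [X, B]]` is positive
semidefinite. It is admissible because it solves the Riccati equation `G A⁻¹ G = B`, so the Schur
complement of `A` vanishes; it is the largest because, by the Schur complement,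
`A^{-1/2} X A^{-1/2}` has square at most `A^{-1/2} B A^{-1/2}`, and the square root is operator
monotone. Positive semidefiniteness of block matrices is preserved by convex combinations, so
`λ (A₁ # B₁) + (1 - λ) (A₂ # B₂)` is admissible for the pair
`(λ A₁ + (1 - λ) A₂, λ B₁ + (1 - λ) B₂)`.
-/

open scoped MatrixOrder

theorem CStarAlgebra.le_of_mul_self_le_mul_self {A : Type*} [CStarAlgebra A] [PartialOrder A]
    [StarOrderedRing A] {y z : A} (hy : IsSelfAdjoint y) (hz : 0 ≤ z) (h : y * y ≤ z * z) :
    y ≤ z :=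
  calc y ≤ CFC.abs y := sub_nonneg.mp <|
        (CFC.abs_sub_self y).symm ▸ smul_nonneg zero_le_two (CFC.negPart_nonneg y)
    _ = CFC.sqrt (y * y) := by rw [CFC.abs, hy.star_eq]
    _ ≤ CFC.sqrt (z * z) := CFC.sqrt_le_sqrt _ _ h
    _ = z := CFC.sqrt_mul_self z

open scoped Matrix.Norms.L2Operator in
theorem Matrix.le_of_mul_self_le_mul_self {m : Type*} [Fintype m] [DecidableEq m]
    {Y Z : Matrix m m ℂ} (hY : Y.IsHermitian) (hZ : 0 ≤ Z) (h : Y * Y ≤ Z * Z) : Y ≤ Z :=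
  CStarAlgebra.le_of_mul_self_le_mul_self hY hZ h

section CFC

variable {A : Type*} [TopologicalSpace A] [Ring A] [StarRing A] [PartialOrder A]
  [StarOrderedRing A] [Algebra ℝ A] [ContinuousFunctionalCalculus ℝ A IsSelfAdjoint]
  [NonnegSpectrumClass ℝ A] {a : A}

theorem cfc_sqrt_mul_cfc_sqrt (ha : 0 ≤ a) : cfc Real.sqrt a * cfc Real.sqrt a = a := by
  rw [← cfc_mul .., cfc_congr fun x hx => Real.mul_self_sqrt (spectrum_nonneg_of_nonneg ha hx),
    cfc_id' ℝ a]

theorem IsStrictlyPositive.cfc_sqrt_mul_cfc_inv_sqrt (ha : IsStrictlyPositive a) :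
    cfc Real.sqrt a * cfc (fun t => (Real.sqrt t)⁻¹) a = 1 := by
  have hsqrt_ne {x : ℝ} (hx : x ∈ spectrum ℝ a) : Real.sqrt x ≠ 0 :=
    (Real.sqrt_pos.2 (ha.spectrum_pos hx)).ne'
  have hcont : ContinuousOn (fun t => (Real.sqrt t)⁻¹) (spectrum ℝ a) :=
    Real.continuous_sqrt.continuousOn.inv₀ fun _ => hsqrt_ne
  rw [← cfc_mul _ _ a (hg := hcont),
    cfc_congr fun _ hx => mul_inv_cancel₀ (hsqrt_ne hx), cfc_const_one ℝ a]

theorem IsStrictlyPositive.cfc_inv_sqrt_mul_cfc_sqrt (ha : IsStrictlyPositive a) :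
    cfc (fun t => (Real.sqrt t)⁻¹) a * cfc Real.sqrt a = 1 :=
  (cfc_commute_cfc _ _ a).eq.symm.trans ha.cfc_sqrt_mul_cfc_inv_sqrt

end CFC

theorem mul_mul_mul_cancel_of_mul_eq_one {M : Type*} [Monoid M] {s i : M} (hsi : s * i = 1)
    (his : i * s = 1) (x : M) : s * (i * x * i) * s = x := by
  rw [← mul_assoc, ← mul_assoc, hsi, one_mul, mul_assoc, his, mul_one]

namespace Matrix

variable {n : ℕ} {A B X : Matrix (Fin n) (Fin n) ℂ}

theorem isHermitian_geomMean (A B : Matrix (Fin n) (Fin n) ℂ) : (geomMean A B).IsHermitian :=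
  IsSelfAdjoint.conjugate_self (cfc_predicate _ _) (cfc_predicate _ A)

theorem PosDef.inv_eq_cfc_inv_sqrt_mul_self (hA : A.PosDef) :
    A⁻¹ = cfc (fun t => (Real.sqrt t)⁻¹) A * cfc (fun t => (Real.sqrt t)⁻¹) A := by
  have hA' : IsStrictlyPositive A := isStrictlyPositive_iff_posDef.mpr hA
  set s := cfc Real.sqrt A
  set i := cfc (fun t => (Real.sqrt t)⁻¹) A
  have hsi : s * i = 1 := hA'.cfc_sqrt_mul_cfc_inv_sqrt
  refine inv_eq_right_inv ?_
  rw [← cfc_sqrt_mul_cfc_sqrt hA'.nonneg, mul_assoc, ← mul_assoc s i i, hsi, one_mul, hsi]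

theorem geomMean_mul_inv_mul_geomMean (hA : A.PosDef) (hB : B.PosSemidef) :
    geomMean A B * A⁻¹ * geomMean A B = B := by
  have hA' : IsStrictlyPositive A := isStrictlyPositive_iff_posDef.mpr hA
  set s := cfc Real.sqrt A
  set i := cfc (fun t => (Real.sqrt t)⁻¹) A
  set S := cfc Real.sqrt (i * B * i)
  have hsi : s * i = 1 := hA'.cfc_sqrt_mul_cfc_inv_sqrt
  have his : i * s = 1 := hA'.cfc_inv_sqrt_mul_cfc_sqrt
  have hinv : A⁻¹ = i * i := hA.inv_eq_cfc_inv_sqrt_mul_self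
  have hSS : S * S = i * B * i := cfc_sqrt_mul_cfc_sqrt <|
    IsSelfAdjoint.conjugate_nonneg hB.nonneg (cfc_predicate _ A)
  calc s * S * s * A⁻¹ * (s * S * s) = s * S * (s * i) * (i * s) * S * s := by
        rw [hinv]; simp only [mul_assoc]
    _ = s * (i * B * i) * s := by rw [hsi, his, mul_one, mul_one, mul_assoc s S, hSS]
    _ = B := mul_mul_mul_cancel_of_mul_eq_one hsi his B

theorem posSemidef_fromBlocks_geomMean (hA : A.PosDef) (hB : B.PosSemidef) :
    (fromBlocks A (geomMean A B) (geomMean A B) B).PosSemidef := by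
  have := hA.isUnit.invertible
  have hG := (isHermitian_geomMean A B).eq
  have hblock := (PosDef.fromBlocks₁₁ (geomMean A B) B hA).mpr <| by
    rw [hG, geomMean_mul_inv_mul_geomMean hA hB, sub_self]
    exact .zero
  rwa [hG] at hblock

theorem le_geomMean_of_posSemidef_fromBlocks (hA : A.PosDef) (hB : B.PosSemidef)
    (hX : X.IsHermitian) (hblock : (fromBlocks A X X B).PosSemidef) : X ≤ geomMean A B := by
  have := hA.isUnit.invertible
  have hA' : IsStrictlyPositive A := isStrictlyPositive_iff_posDef.mpr hA
  set s := cfc Real.sqrt A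
  set i := cfc (fun t => (Real.sqrt t)⁻¹) A
  set S := cfc Real.sqrt (i * B * i)
  have hsi : s * i = 1 := hA'.cfc_sqrt_mul_cfc_inv_sqrt
  have his : i * s = 1 := hA'.cfc_inv_sqrt_mul_cfc_sqrt
  have hinv : A⁻¹ = i * i := hA.inv_eq_cfc_inv_sqrt_mul_self
  have hs : IsSelfAdjoint s := cfc_predicate _ A
  have hi : IsSelfAdjoint i := cfc_predicate _ A
  have hSS : S * S = i * B * i := cfc_sqrt_mul_cfc_sqrt <| hi.conjugate_nonneg hB.nonneg
  have hschur : X * A⁻¹ * X ≤ B := by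
    refine le_iff.mpr ?_
    simpa only [hX.eq] using (PosDef.fromBlocks₁₁ X B hA).mp (by rwa [hX.eq])
  have hsq : (i * X * i) * (i * X * i) ≤ S * S := by
    rw [hSS, show (i * X * i) * (i * X * i) = i * (X * A⁻¹ * X) * i by
      rw [hinv]; simp only [mul_assoc]]
    exact hi.conjugate_le_conjugate hschur
  calc X = s * (i * X * i) * s := (mul_mul_mul_cancel_of_mul_eq_one hsi his X).symm
    _ ≤ s * S * s := hs.conjugate_le_conjugate <| le_of_mul_self_le_mul_self
        (IsSelfAdjoint.conjugate_self hX hi) (cfc_nonneg fun x _ => Real.sqrt_nonneg x) hsq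

theorem convex_setOf_posDef {𝕜 m : Type*} [RCLike 𝕜] [Fintype m] :
    Convex ℝ {M : Matrix m m 𝕜 | M.PosDef} := by
  intro M hM N hN a b ha hb hab
  rcases ha.eq_or_lt with rfl | ha
  · simpa [show b = 1 by linarith] using hN
  · exact (hM.smul ha).add_posSemidef (hN.posSemidef.smul hb)

end Matrix

open Matrix

/-- The geometric operator mean is jointly concave on pairs of positive definite
matrices, in the Loewner order. -/
theorem geomMean_jointly_concave {n : ℕ}
    (A₁ A₂ B₁ B₂ : Matrix (Fin n) (Fin n) ℂ)
    (hA₁ : A₁.PosDef) (hA₂ : A₂.PosDef) (hB₁ : B₁.PosDef) (hB₂ : B₂.PosDef)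
    (l : ℝ) (hl : l ∈ Set.Icc (0 : ℝ) 1) :
    (Matrix.geomMean (l • A₁ + (1 - l) • A₂) (l • B₁ + (1 - l) • B₂) -
      (l • Matrix.geomMean A₁ B₁ + (1 - l) • Matrix.geomMean A₂ B₂)).PosSemidef := by
  have hl₀ : 0 ≤ l := hl.1
  have hl₁ : 0 ≤ 1 - l := sub_nonneg.mpr hl.2
  refine le_geomMean_of_posSemidef_fromBlocks
    (convex_setOf_posDef hA₁ hA₂ hl₀ hl₁ (add_sub_cancel l 1))
    ((hB₁.posSemidef.smul hl₀).add (hB₂.posSemidef.smul hl₁))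
    (((isHermitian_geomMean A₁ B₁).smul (.all l)).add
      ((isHermitian_geomMean A₂ B₂).smul (.all (1 - l)))) ?_
  rw [← fromBlocks_add, ← fromBlocks_smul, ← fromBlocks_smul]
  exact ((posSemidef_fromBlocks_geomMean hA₁ hB₁.posSemidef).smul hl₀).add
    ((posSemidef_fromBlocks_geomMean hA₂ hB₂.posSemidef).smul hl₁)
end

section
/- Let H be an infinite-dimensional complex Hilbert space and let F be a map from pairs of positive semidefinite bounded operators on H into the bounded operators on H satisfying: F(u*Au, u*Bu) = u*F(A,B)u for every unitary u on H; F(pAp + qAq, pBp + qBq) = pF(pAp, pBp)p + qF(qAq, qBq)q for orthogonal projections p, q with pq = 0; and F(tA, tB) = t F(A,B) for t > 0. Let f: (0,∞) → ℝ be the function determined by F(1, t·1) = f(t)·1. Then for every positive semidefinite operator A with finite spectral decomposition A = Σ_{i=1}^n λ_i P_i, where λ_i > 0 and P₁, …, P_n are mutually orthogonal projections summing to the identity, one has F(1, A) = f(A) = Σ_{i=1}^n f(λ_i) P_i. -/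
/-!
Split the identity as `p + (1 - p)` for a projection `p`: compatibility with orthogonal sums turns
`F(1, t·1) = f(t)·1` into `p F(p, t p) p = f(t) p`. Peeling off one spectral projection at a time
from `A = Σ λᵢ Pᵢ` then gives `F(1, A) = Σ Pᵢ F(Pᵢ, λᵢ Pᵢ) Pᵢ = Σ f(λᵢ) Pᵢ`.
-/

open Finset

section Corners

variable {R : Type*} [Ring R] {p q : R}

lemma mul_add_corners_mul_self (hp : IsIdempotentElem p) (hpq : p * q = 0) (X Y : R) :
    p * (p * X * p + q * Y * q) * p = p * X * p := by
  simp only [mul_add, ← mul_assoc, hp.eq, hp.mul_mul_self, hpq, zero_mul, add_zero]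

lemma add_mul_add_corners_mul_add (hp : IsIdempotentElem p) (hq : IsIdempotentElem q)
    (hpq : p * q = 0) (hqp : q * p = 0) (X Y : R) :
    (p + q) * (p * X * p + q * Y * q) * (p + q) = p * X * p + q * Y * q := by
  have hpq' (y : R) : y * p * q = 0 := by rw [mul_assoc, hpq, mul_zero]
  have hqp' (y : R) : y * q * p = 0 := by rw [mul_assoc, hqp, mul_zero]
  simp only [mul_add, add_mul, ← mul_assoc, hp.eq, hq.eq, hp.mul_mul_self, hq.mul_mul_self, hpq,
    hqp, hpq', hqp', add_zero, zero_add]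

end Corners

section OrthogonalFamily

variable {R : Type*} [Ring R] {ι : Type*} [DecidableEq ι] {P : ι → R}

lemma mul_eq_ite_of_orthogonal (hP : ∀ i, IsIdempotentElem (P i))
    (horth : Pairwise fun i j ↦ P i * P j = 0) (i j : ι) :
    P i * P j = if i = j then P i else 0 := by
  split_ifs with h
  · subst h
    exact (hP i).eq
  · exact horth h

lemma IsStarProjection.sum_of_orthogonal [StarRing R] (hP : ∀ i, IsStarProjection (P i))
    (horth : Pairwise fun i j ↦ P i * P j = 0) (s : Finset ι) :
    IsStarProjection (∑ i ∈ s, P i) where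
  isIdempotentElem := by
    simp [IsIdempotentElem, mul_sum, sum_mul,
      mul_eq_ite_of_orthogonal (fun i ↦ (hP i).isIdempotentElem) horth]
  isSelfAdjoint := isSelfAdjoint_sum s fun i _ ↦ (hP i).isSelfAdjoint

end OrthogonalFamily

section Compression

variable {R : Type*} [Ring R] [StarRing R] [PartialOrder R] [StarOrderedRing R]

def RespectsOrthogonalSums (F : R → R → R) : Prop :=
  ∀ p q : R, IsIdempotentElem p → IsSelfAdjoint p → IsIdempotentElem q → IsSelfAdjoint q →
    p * q = 0 → ∀ A B : R, 0 ≤ A → 0 ≤ B →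
      F (p * A * p + q * A * q) (p * B * p + q * B * q) =
        p * F (p * A * p) (p * B * p) * p + q * F (q * A * q) (q * B * q) * q

def compression (F : R → R → R) (e B : R) : R := e * F e B * e

variable {F : R → R → R}

lemma RespectsOrthogonalSums.compression_add (hF : RespectsOrthogonalSums F) {p q B : R}
    (hp : IsStarProjection p) (hq : IsStarProjection q) (hpq : p * q = 0) (hB : 0 ≤ B) :
    compression F (p + q) (p * B * p + q * B * q) =
      compression F p (p * B * p) + compression F q (q * B * q) := by
  have hqp : q * p = 0 := by
    simpa [hp.isSelfAdjoint.star_eq, hq.isSelfAdjoint.star_eq] using congr(star $(hpq))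
  have h := hF p q hp.isIdempotentElem hp.isSelfAdjoint hq.isIdempotentElem hq.isSelfAdjoint hpq
    1 B (IsStarProjection.one R).nonneg hB
  simp only [mul_one, hp.isIdempotentElem.eq, hq.isIdempotentElem.eq] at h
  rw [compression, h,
    add_mul_add_corners_mul_add hp.isIdempotentElem hq.isIdempotentElem hpq hqp]
  rfl

variable [Algebra ℝ R] [PosSMulMono ℝ R] {f : ℝ → ℝ}

lemma RespectsOrthogonalSums.compression_smul_self (hF : RespectsOrthogonalSums F)
    (hf : ∀ t : ℝ, 0 < t → F 1 (t • (1 : R)) = f t • (1 : R)) {p : R} (hp : IsStarProjection p)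
    {t : ℝ} (ht : 0 < t) :
    compression F p (t • p) = f t • p := by
  set q := 1 - p
  have hpq : p * q = 0 := hp.mul_one_sub_self
  have h := hF.compression_add hp hp.one_sub hpq (smul_nonneg ht.le (IsStarProjection.one R).nonneg)
  simp only [mul_smul_comm, smul_mul_assoc, mul_one, hp.isIdempotentElem.eq,
    hp.one_sub.isIdempotentElem.eq, ← smul_add, add_sub_cancel] at h
  calc compression F p (t • p)
      = p * (compression F p (t • p) + compression F q (t • q)) * p :=
        (mul_add_corners_mul_self hp.isIdempotentElem hpq _ _).symm
    _ = p * (f t • 1) * p := by rw [← h, compression, hf t ht, one_mul, mul_one]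
    _ = f t • p := by rw [mul_smul_comm, mul_one, smul_mul_assoc, hp.isIdempotentElem.eq]

lemma RespectsOrthogonalSums.compression_sum (hF : RespectsOrthogonalSums F)
    (hf : ∀ t : ℝ, 0 < t → F 1 (t • (1 : R)) = f t • (1 : R)) {ι : Type*} [DecidableEq ι]
    {P : ι → R} (hP : ∀ i, IsStarProjection (P i)) (horth : Pairwise fun i j ↦ P i * P j = 0)
    {lam : ι → ℝ} (hlam : ∀ i, 0 < lam i) (s : Finset ι) :
    compression F (∑ i ∈ s, P i) (∑ i ∈ s, lam i • P i) = ∑ i ∈ s, f (lam i) • P i := by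
  induction s using Finset.induction_on with
  | empty => simp [compression]
  | insert a s ha ih =>
    have hPP := mul_eq_ite_of_orthogonal (fun i ↦ (hP i).isIdempotentElem) horth
    set B := lam a • P a + ∑ i ∈ s, lam i • P i
    have hterm (i : ι) : 0 ≤ lam i • P i := smul_nonneg (hlam i).le (hP i).nonneg
    have hB : 0 ≤ B := add_nonneg (hterm a) (sum_nonneg fun i _ ↦ hterm i)
    have hcorner_a : P a * B * P a = lam a • P a := by
      simp [B, mul_add, mul_sum, hPP, ha]
    have hcorner_s : (∑ i ∈ s, P i) * B * (∑ i ∈ s, P i) = ∑ i ∈ s, lam i • P i := by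
      simp [B, mul_add, mul_sum, sum_mul, hPP, ha]
    have h := hF.compression_add (hP a) (.sum_of_orthogonal hP horth s)
      (by simp [mul_sum, hPP, ha]) hB
    rw [hcorner_a, hcorner_s] at h
    rw [sum_insert ha, sum_insert ha, sum_insert ha, h,
      hF.compression_smul_self hf (hP a) (hlam a), ih]

end Compression

theorem F_one_eq_funcCalc_general {H : Type*} [NormedAddCommGroup H] [InnerProductSpace ℂ H]
    [CompleteSpace H]
    (F : (H →L[ℂ] H) → (H →L[ℂ] H) → (H →L[ℂ] H))
    (hreg₂ : ∀ p q : H →L[ℂ] H, IsIdempotentElem p → IsSelfAdjoint p →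
      IsIdempotentElem q → IsSelfAdjoint q → p * q = 0 →
      ∀ A B : H →L[ℂ] H, 0 ≤ A → 0 ≤ B →
        F (p * A * p + q * A * q) (p * B * p + q * B * q) =
          p * F (p * A * p) (p * B * p) * p + q * F (q * A * q) (q * B * q) * q)
    (f : ℝ → ℝ)
    (hf : ∀ t : ℝ, 0 < t → F 1 (t • (1 : H →L[ℂ] H)) = f t • (1 : H →L[ℂ] H))
    (n : ℕ) (lam : Fin n → ℝ) (P : Fin n → (H →L[ℂ] H)) (A : H →L[ℂ] H)
    (hlam : ∀ i, 0 < lam i)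
    (hproj : ∀ i, IsIdempotentElem (P i) ∧ IsSelfAdjoint (P i))
    (horth : ∀ i j, i ≠ j → P i * P j = 0)
    (hsum : ∑ i, P i = (1 : H →L[ℂ] H))
    (hA : A = ∑ i, lam i • P i) :
    F 1 A = ∑ i, f (lam i) • P i := by
  have hP (i : Fin n) : IsStarProjection (P i) := ⟨(hproj i).1, (hproj i).2⟩
  have h := RespectsOrthogonalSums.compression_sum hreg₂ hf hP (fun i j ↦ horth i j) hlam univ
  rwa [hsum, ← hA, compression, one_mul, mul_one] at h

/-- For a regular, positively homogeneous map `F` on pairs of positive semidefinite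
operators on an infinite-dimensional Hilbert space, with `f` determined by
`F(1, t·1) = f(t)·1`, one has `F(1, A) = f(A) = Σ f(λᵢ) Pᵢ` for every positive
operator with finite spectral decomposition `A = Σ λᵢ Pᵢ`. -/
theorem F_one_eq_funcCalc {H : Type*} [NormedAddCommGroup H] [InnerProductSpace ℂ H]
    [CompleteSpace H] (hinf : ¬ FiniteDimensional ℂ H)
    (F : (H →L[ℂ] H) → (H →L[ℂ] H) → (H →L[ℂ] H))
    (hreg₁ : ∀ A B : H →L[ℂ] H, 0 ≤ A → 0 ≤ B → ∀ u ∈ unitary (H →L[ℂ] H),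
      F (star u * A * u) (star u * B * u) = star u * F A B * u)
    (hreg₂ : ∀ p q : H →L[ℂ] H, IsIdempotentElem p → IsSelfAdjoint p →
      IsIdempotentElem q → IsSelfAdjoint q → p * q = 0 →
      ∀ A B : H →L[ℂ] H, 0 ≤ A → 0 ≤ B →
        F (p * A * p + q * A * q) (p * B * p + q * B * q) =
          p * F (p * A * p) (p * B * p) * p + q * F (q * A * q) (q * B * q) * q)
    (hhom : ∀ A B : H →L[ℂ] H, 0 ≤ A → 0 ≤ B → ∀ t : ℝ, 0 < t →
      F (t • A) (t • B) = t • F A B)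
    (f : ℝ → ℝ)
    (hf : ∀ t : ℝ, 0 < t → F 1 (t • (1 : H →L[ℂ] H)) = f t • (1 : H →L[ℂ] H))
    (n : ℕ) (lam : Fin n → ℝ) (P : Fin n → (H →L[ℂ] H)) (A : H →L[ℂ] H)
    (hlam : ∀ i, 0 < lam i)
    (hproj : ∀ i, IsIdempotentElem (P i) ∧ IsSelfAdjoint (P i))
    (horth : ∀ i j, i ≠ j → P i * P j = 0)
    (hsum : ∑ i, P i = (1 : H →L[ℂ] H))
    (hA : A = ∑ i, lam i • P i) :
    F 1 A = ∑ i, f (lam i) • P i :=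
  F_one_eq_funcCalc_general F hreg₂ f hf n lam P A hlam hproj horth hsum hA
end

section
/- If a real function f defined on an interval I is mid-point operator convex, i.e. f((X+Y)/2) ≤ (f(X) + f(Y))/2 in the Loewner order for all Hermitian matrices X, Y (of every size) with spectra in I, then f is operator convex: f(λX + (1−λ)Y) ≤ λ f(X) + (1−λ) f(Y) for all such X, Y and all λ ∈ [0,1]. No continuity assumption on f is required. -/
/-!
Put `X` and `Y` on the diagonal of `D = diag(X, Y)`, let `U` be the block rotation with
cosine `√λ` and sine `√(1 - λ)`, and `V = diag(1, -1)`. The average of `U D U*` and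
`V U D U* V*` is `diag(λX + (1-λ)Y, (1-λ)X + λY)`. Since `f` commutes with unitary
conjugation and with block diagonals, midpoint convexity for the pair `U D U*`,
`V U D U* V*` of size `2n` gives the convexity inequality for `λ` in the upper left block.

On a matrix, `f` only matters on the finite spectrum, where it agrees with an interpolating
polynomial; this is why no continuity of `f` is needed.
-/

open scoped ComplexOrder
open Polynomial

theorem Set.Finite.exists_polynomial_eqOn (f : ℝ → ℝ) {S : Set ℝ} (hS : S.Finite) :
    ∃ p : ℝ[X], S.EqOn f (fun x => p.eval x) :=
  ⟨Lagrange.interpolate hS.toFinset id f, fun _ hx =>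
    (Lagrange.eval_interpolate_at_node f (Set.injOn_id _) (hS.mem_toFinset.mpr hx)).symm⟩

section FiniteSpectrum

variable {A B : Type*} [Ring A] [StarRing A] [Algebra ℝ A] [TopologicalSpace A]
  [ContinuousFunctionalCalculus ℝ A IsSelfAdjoint] [Ring B] [StarRing B] [Algebra ℝ B]
  [TopologicalSpace B] [ContinuousFunctionalCalculus ℝ B IsSelfAdjoint]

theorem cfc_eq_aeval_of_eqOn {f : ℝ → ℝ} {p : ℝ[X]} {a : A}
    (hfp : (spectrum ℝ a).EqOn f (fun x => p.eval x)) (ha : IsSelfAdjoint a := by cfc_tac) :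
    cfc f a = aeval a p := by
  rw [cfc_congr hfp, cfc_polynomial p a]

theorem AlgHomClass.map_cfc_of_finite_spectrum {F : Type*} [FunLike F A B] [AlgHomClass F ℝ A B]
    (φ : F) (f : ℝ → ℝ) {a : A} (hfin : (spectrum ℝ a).Finite)
    (ha : IsSelfAdjoint a := by cfc_tac) (hφa : IsSelfAdjoint (φ a) := by cfc_tac) :
    φ (cfc f a) = cfc f (φ a) := by
  obtain ⟨p, hp⟩ := hfin.exists_polynomial_eqOn f
  rw [cfc_eq_aeval_of_eqOn hp, cfc_eq_aeval_of_eqOn (hp.mono (AlgHom.spectrum_apply_subset φ a)),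
    aeval_algHom_apply]

end FiniteSpectrum

namespace Matrix

section BlockDiagonal

variable {R : Type*} [CommSemiring R] {m n : Type*} [Fintype m] [Fintype n] [DecidableEq m]
  [DecidableEq n]

def fromBlocksDiagAlgHom (α : Type*) [Semiring α] [Algebra R α] :
    (Matrix m m α × Matrix n n α) →ₐ[R] Matrix (m ⊕ n) (m ⊕ n) α where
  toFun P := fromBlocks P.1 0 0 P.2
  map_one' := fromBlocks_one
  map_mul' P Q := by simp [fromBlocks_multiply]
  map_zero' := fromBlocks_zero
  map_add' P Q := by simp [fromBlocks_add]
  commutes' r := by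
    simp only [Algebra.algebraMap_eq_smul_one, ← fromBlocks_one, fromBlocks_smul, smul_zero]
    rfl

theorem aeval_fromBlocks_zero {α : Type*} [Semiring α] [Algebra R α] (X : Matrix m m α)
    (Y : Matrix n n α) (p : R[X]) :
    aeval (fromBlocks X 0 0 Y) p = fromBlocks (aeval X p) 0 0 (aeval Y p) := by
  rw [show fromBlocks X 0 0 Y = fromBlocksDiagAlgHom (R := R) α (X, Y) from rfl,
    aeval_algHom_apply, aeval_prod_apply]
  rfl

theorem spectrum_fromBlocks_zero_subset {α : Type*} [Ring α] [Algebra R α] (X : Matrix m m α)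
    (Y : Matrix n n α) :
    spectrum R (fromBlocks X 0 0 Y) ⊆ spectrum R X ∪ spectrum R Y := by
  rw [← Prod.spectrum_eq]
  exact AlgHom.spectrum_apply_subset (fromBlocksDiagAlgHom α) (X, Y)

theorem cfc_fromBlocks_zero {𝕜 : Type*} [RCLike 𝕜] (f : ℝ → ℝ) {X : Matrix m m 𝕜}
    {Y : Matrix n n 𝕜} (hX : X.IsHermitian) (hY : Y.IsHermitian) :
    cfc f (fromBlocks X 0 0 Y) = fromBlocks (cfc f X) 0 0 (cfc f Y) := by
  obtain ⟨p, hp⟩ := (X.finite_real_spectrum.union Y.finite_real_spectrum).exists_polynomial_eqOn f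
  have hXY : (fromBlocks X 0 0 Y).IsHermitian := hX.fromBlocks (by simp) hY
  rw [cfc_eq_aeval_of_eqOn (hp.mono (spectrum_fromBlocks_zero_subset X Y)) hXY.isSelfAdjoint,
    cfc_eq_aeval_of_eqOn (hp.mono Set.subset_union_left) hX.isSelfAdjoint,
    cfc_eq_aeval_of_eqOn (hp.mono Set.subset_union_right) hY.isSelfAdjoint,
    aeval_fromBlocks_zero]

end BlockDiagonal

theorem PosSemidef.toBlocks₁₁ {R m n : Type*} [CommRing R] [PartialOrder R] [StarRing R]
    {M : Matrix (m ⊕ n) (m ⊕ n) R} (hM : M.PosSemidef) : M.toBlocks₁₁.PosSemidef :=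
  hM.submatrix Sum.inl

section Rotation

variable {𝕜 : Type*} [RCLike 𝕜] {n : Type*} [DecidableEq n]

def blockRotation (c s : ℝ) : Matrix (n ⊕ n) (n ⊕ n) 𝕜 :=
  fromBlocks (c • 1) (-(s • 1)) (s • 1) (c • 1)

def blockReflection : Matrix (n ⊕ n) (n ⊕ n) 𝕜 :=
  fromBlocks 1 0 0 (-1)

theorem star_blockRotation (c s : ℝ) :
    star (blockRotation c s : Matrix (n ⊕ n) (n ⊕ n) 𝕜) = blockRotation c (-s) := by
  simp [blockRotation, star_eq_conjTranspose, fromBlocks_conjTranspose]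

theorem blockRotation_one_zero : (blockRotation 1 0 : Matrix (n ⊕ n) (n ⊕ n) 𝕜) = 1 := by
  simp [blockRotation, fromBlocks_one]

variable [Fintype n]

theorem blockRotation_mul (c s c' s' : ℝ) :
    (blockRotation c s : Matrix (n ⊕ n) (n ⊕ n) 𝕜) * blockRotation c' s' =
      blockRotation (c * c' - s * s') (s * c' + c * s') := by
  simp only [blockRotation, fromBlocks_multiply, smul_mul_smul_comm, mul_one, neg_mul, mul_neg]
  congr 1 <;> module

theorem blockRotation_mem_unitary {c s : ℝ} (h : c ^ 2 + s ^ 2 = 1) :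
    (blockRotation c s : Matrix (n ⊕ n) (n ⊕ n) 𝕜) ∈ unitary _ := by
  rw [Unitary.mem_iff, star_blockRotation, blockRotation_mul, blockRotation_mul,
    show c * c - -s * s = 1 by linear_combination h, show c * c - s * -s = 1 by linear_combination h,
    show -s * c + c * s = 0 by ring, show s * c + c * -s = 0 by ring, blockRotation_one_zero]
  exact ⟨rfl, rfl⟩

theorem blockReflection_mem_unitary :
    (blockReflection : Matrix (n ⊕ n) (n ⊕ n) 𝕜) ∈ unitary _ := by
  rw [Unitary.mem_iff]
  simp [blockReflection, star_eq_conjTranspose, fromBlocks_conjTranspose, fromBlocks_multiply]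

theorem blockRotation_conj_fromBlocks_zero (c s : ℝ) (P Q : Matrix n n 𝕜) :
    blockRotation c s * fromBlocks P 0 0 Q * star (blockRotation c s) =
      fromBlocks (c ^ 2 • P + s ^ 2 • Q) ((c * s) • (P - Q)) ((c * s) • (P - Q))
        (s ^ 2 • P + c ^ 2 • Q) := by
  rw [star_blockRotation]
  simp only [blockRotation, fromBlocks_multiply, smul_mul_assoc, mul_smul_comm, one_mul, mul_one,
    mul_zero, add_zero, zero_add, neg_mul, mul_neg]
  congr 1 <;> module

theorem blockReflection_conj (A B C D : Matrix n n 𝕜) :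
    blockReflection * fromBlocks A B C D * star blockReflection = fromBlocks A (-B) (-C) D := by
  simp [blockReflection, star_eq_conjTranspose, fromBlocks_conjTranspose, fromBlocks_multiply]

theorem midpoint_conj_blockRotation_blockReflection (c s : ℝ) (P Q : Matrix n n 𝕜) :
    let B := blockRotation c s * fromBlocks P 0 0 Q * star (blockRotation c s)
    (2 : ℝ)⁻¹ • B + (2 : ℝ)⁻¹ • (blockReflection * B * star blockReflection) =
      fromBlocks (c ^ 2 • P + s ^ 2 • Q) 0 0 (s ^ 2 • P + c ^ 2 • Q) := by
  simp only [blockRotation_conj_fromBlocks_zero, blockReflection_conj, fromBlocks_smul,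
    fromBlocks_add]
  congr 1 <;> module

end Rotation

end Matrix

open Matrix Unitary

variable (𝕜 : Type*) [RCLike 𝕜] (ι : Type*) [Fintype ι] [DecidableEq ι]

def MidpointOperatorConvexOn (I : Set ℝ) (f : ℝ → ℝ) : Prop :=
  ∀ X Y : Matrix ι ι 𝕜, X.IsHermitian → Y.IsHermitian → spectrum ℝ X ⊆ I → spectrum ℝ Y ⊆ I →
    ((2 : ℝ)⁻¹ • cfc f X + (2 : ℝ)⁻¹ • cfc f Y - cfc f ((2 : ℝ)⁻¹ • X + (2 : ℝ)⁻¹ • Y)).PosSemidef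

variable {𝕜 ι} {I : Set ℝ} {f : ℝ → ℝ}

theorem MidpointOperatorConvexOn.of_equiv {κ : Type*} [Fintype κ] [DecidableEq κ] (e : ι ≃ κ)
    (h : MidpointOperatorConvexOn 𝕜 κ I f) : MidpointOperatorConvexOn 𝕜 ι I f := by
  intro X Y hX hY hXI hYI
  let ρ := reindexAlgEquiv ℝ 𝕜 e
  have hρ {Z : Matrix ι ι 𝕜} (hZ : IsSelfAdjoint Z) : IsSelfAdjoint (ρ Z) :=
    IsHermitian.submatrix hZ _
  have hX' := hX.isSelfAdjoint
  have hY' := hY.isSelfAdjoint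
  have key := h (ρ X) (ρ Y) (hρ hX') (hρ hY') (by rwa [AlgEquiv.spectrum_eq])
    (by rwa [AlgEquiv.spectrum_eq])
  rw [← map_smul, ← map_smul, ← map_add,
    ← AlgHomClass.map_cfc_of_finite_spectrum ρ f X.finite_real_spectrum (hφa := hρ hX'),
    ← AlgHomClass.map_cfc_of_finite_spectrum ρ f Y.finite_real_spectrum (hφa := hρ hY'),
    ← AlgHomClass.map_cfc_of_finite_spectrum ρ f finite_real_spectrum (hφa := hρ (by cfc_tac)),
    ← map_smul, ← map_smul, ← map_add, ← map_sub] at key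
  exact (posSemidef_submatrix_equiv e.symm).mp key

theorem MidpointOperatorConvexOn.posSemidef_convexCombination
    (h : MidpointOperatorConvexOn 𝕜 (ι ⊕ ι) I f) {X Y : Matrix ι ι 𝕜} (hX : X.IsHermitian)
    (hY : Y.IsHermitian) (hXI : spectrum ℝ X ⊆ I) (hYI : spectrum ℝ Y ⊆ I) {l : ℝ}
    (hl : l ∈ Set.Icc 0 1) :
    (l • cfc f X + (1 - l) • cfc f Y - cfc f (l • X + (1 - l) • Y)).PosSemidef := by
  obtain ⟨hl0, hl1⟩ := hl
  have hc : √l ^ 2 = l := Real.sq_sqrt hl0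
  have hs : √(1 - l) ^ 2 = 1 - l := Real.sq_sqrt (by linarith)
  let U : unitary (Matrix (ι ⊕ ι) (ι ⊕ ι) 𝕜) :=
    ⟨blockRotation √l √(1 - l), blockRotation_mem_unitary (by rw [hc, hs]; ring)⟩
  let V : unitary (Matrix (ι ⊕ ι) (ι ⊕ ι) 𝕜) := ⟨blockReflection, blockReflection_mem_unitary⟩
  have hcomb (a b : ℝ) : (a • X + b • Y).IsHermitian :=
    ((IsSelfAdjoint.all a).smul hX.isSelfAdjoint).add ((IsSelfAdjoint.all b).smul hY.isSelfAdjoint)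
  have hD : IsSelfAdjoint (fromBlocks X 0 0 Y) := hX.fromBlocks (by simp) hY
  have hDI : spectrum ℝ (fromBlocks X 0 0 Y) ⊆ I :=
    (spectrum_fromBlocks_zero_subset X Y).trans (Set.union_subset hXI hYI)
  have key := h (conjStarAlgAut ℝ _ U (fromBlocks X 0 0 Y))
    (conjStarAlgAut ℝ _ (V * U) (fromBlocks X 0 0 Y)) (hD.map _) (hD.map _)
    (by rwa [AlgEquiv.spectrum_eq]) (by rwa [AlgEquiv.spectrum_eq])
  rw [← AlgHomClass.map_cfc_of_finite_spectrum (conjStarAlgAut ℝ _ U) f finite_real_spectrum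
      (hφa := hD.map _),
    ← AlgHomClass.map_cfc_of_finite_spectrum (conjStarAlgAut ℝ _ (V * U)) f finite_real_spectrum
      (hφa := hD.map _),
    cfc_fromBlocks_zero f hX hY, conjStarAlgAut_mul_apply, conjStarAlgAut_mul_apply] at key
  simp only [conjStarAlgAut_apply] at key
  rw [midpoint_conj_blockRotation_blockReflection, midpoint_conj_blockRotation_blockReflection,
    hc, hs, cfc_fromBlocks_zero f (hcomb l (1 - l)) (hcomb (1 - l) l)] at key
  exact key.toBlocks₁₁

theorem midpoint_operatorConvex_implies_operatorConvex_general
    (I : Set ℝ) (f : ℝ → ℝ)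
    (hmid : ∀ (n : ℕ) (X Y : Matrix (Fin n) (Fin n) ℂ), X.IsHermitian → Y.IsHermitian →
      (∀ x ∈ spectrum ℝ X, x ∈ I) → (∀ x ∈ spectrum ℝ Y, x ∈ I) →
      ((2 : ℝ)⁻¹ • cfc f X + (2 : ℝ)⁻¹ • cfc f Y -
        cfc f ((2 : ℝ)⁻¹ • X + (2 : ℝ)⁻¹ • Y)).PosSemidef) :
    ∀ (n : ℕ) (X Y : Matrix (Fin n) (Fin n) ℂ), X.IsHermitian → Y.IsHermitian →
      (∀ x ∈ spectrum ℝ X, x ∈ I) → (∀ x ∈ spectrum ℝ Y, x ∈ I) →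
      ∀ l : ℝ, l ∈ Set.Icc (0 : ℝ) 1 →
        (l • cfc f X + (1 - l) • cfc f Y - cfc f (l • X + (1 - l) • Y)).PosSemidef := by
  intro n X Y hX hY hXI hYI l hl
  have hmid₂ₙ : MidpointOperatorConvexOn ℂ (Fin (n + n)) I f := hmid (n + n)
  exact (hmid₂ₙ.of_equiv finSumFinEquiv).posSemidef_convexCombination hX hY hXI hYI hl

/-- A mid-point operator convex function on an interval `I` is operator convex;
no continuity assumption on `f` is required.  Matrices of every size are
considered, with `f` applied via the functional calculus for Hermitian matrices
and inequalities in the Loewner order. -/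
theorem midpoint_operatorConvex_implies_operatorConvex
    (I : Set ℝ) (hI : I.OrdConnected) (f : ℝ → ℝ)
    (hmid : ∀ (n : ℕ) (X Y : Matrix (Fin n) (Fin n) ℂ), X.IsHermitian → Y.IsHermitian →
      (∀ x ∈ spectrum ℝ X, x ∈ I) → (∀ x ∈ spectrum ℝ Y, x ∈ I) →
      ((2 : ℝ)⁻¹ • cfc f X + (2 : ℝ)⁻¹ • cfc f Y -
        cfc f ((2 : ℝ)⁻¹ • X + (2 : ℝ)⁻¹ • Y)).PosSemidef) :
    ∀ (n : ℕ) (X Y : Matrix (Fin n) (Fin n) ℂ), X.IsHermitian → Y.IsHermitian →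
      (∀ x ∈ spectrum ℝ X, x ∈ I) → (∀ x ∈ spectrum ℝ Y, x ∈ I) →
      ∀ l : ℝ, l ∈ Set.Icc (0 : ℝ) 1 →
        (l • cfc f X + (1 - l) • cfc f Y - cfc f (l • X + (1 - l) • Y)).PosSemidef :=
  midpoint_operatorConvex_implies_operatorConvex_general I f hmid
end

section
/- Let C be a contraction on a complex Hilbert space K (i.e. ‖C‖ ≤ 1), and set D = (1 − CC*)^{1/2} and E = (1 − C*C)^{1/2}. Then the 2×2 operator block matrices U = [[C, D],[E, −C*]] and V = [[C, −D],[E, C*]] acting on K ⊕ K are unitary, and for every bounded operator A on K one has (1/2) U* [[A,0],[0,0]] U + (1/2) V* [[A,0],[0,0]] V = [[C*AC, 0],[0, DAD]]. -/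
/-!
`U` is the Julia unitary dilation of `C`: it is unitary as soon as `D² = 1 - CC*`,
`E² = 1 - C*C` and `CE = DC`. The intertwining relation holds because
`C (1 - C*C) = (1 - CC*) C`, and approximating the square root uniformly by polynomials on
an interval containing both spectra carries it over to the continuous functional calculus.
Finally `V = UJ` with `J = diag(1, -1)`, and averaging `X = U* (A ⊕ 0) U` with `JXJ` kills
the off-diagonal entries of `X`, leaving `C*AC ⊕ DAD`.
-/

open Polynomial Filter

theorem SemiconjBy.aeval {R A : Type*} [CommSemiring R] [Semiring A] [Algebra R A] {c a b : A}
    (h : SemiconjBy c a b) (p : R[X]) : SemiconjBy c (aeval a p) (aeval b p) := by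
  induction p using Polynomial.induction_on' with
  | add p q hp hq => simpa only [map_add] using hp.add_right hq
  | monomial n r =>
    simpa only [aeval_monomial] using
      SemiconjBy.mul_right (Algebra.commute_algebraMap_right r c) (h.pow_right n)

theorem exists_polynomial_seq_tendstoUniformlyOn_Icc {f : ℝ → ℝ} {s t : ℝ}
    (hf : ContinuousOn f (Set.Icc s t)) :
    ∃ p : ℕ → ℝ[X], TendstoUniformlyOn (fun n x ↦ (p n).eval x) f atTop (Set.Icc s t) := by
  choose p hp using fun n : ℕ ↦
    exists_polynomial_near_of_continuousOn s t f hf (1 / (n + 1)) Nat.one_div_pos_of_nat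
  refine ⟨p, Metric.tendstoUniformlyOn_iff.mpr fun ε hε ↦ ?_⟩
  obtain ⟨N, hN⟩ := exists_nat_one_div_lt hε
  filter_upwards [eventually_ge_atTop N] with n hn x hx
  rw [Real.dist_eq, abs_sub_comm]
  refine (hp n x hx).trans (lt_of_le_of_lt ?_ hN)
  gcongr

section CStarAlgebra

variable {A : Type*} [CStarAlgebra A]

theorem SemiconjBy.cfc_real {c a b : A} (h : SemiconjBy c a b)
    (ha : IsSelfAdjoint a) (hb : IsSelfAdjoint b) {f : ℝ → ℝ} (hf : Continuous f) :
    SemiconjBy c (cfc f a) (cfc f b) := by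
  obtain ⟨r, hr⟩ := ((spectrum.isCompact (𝕜 := ℝ) a).union
    (spectrum.isCompact b)).isBounded.subset_closedBall 0
  rw [Real.closedBall_eq_Icc, zero_sub, zero_add, Set.union_subset_iff] at hr
  obtain ⟨p, hp⟩ := exists_polynomial_seq_tendstoUniformlyOn_Icc hf.continuousOn
  have hlim {x : A} (hx : spectrum ℝ x ⊆ Set.Icc (-r) r) := tendsto_cfc_fun (a := x) (hp.mono hx)
    (Eventually.of_forall fun n ↦ (p n).continuous.continuousOn)
  refine tendsto_nhds_unique ((hlim hr.1).const_mul c) ?_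
  convert (hlim hr.2).mul_const c using 2 with n
  rw [cfc_polynomial (p n) a, cfc_polynomial (p n) b]
  exact h.aeval (p n)

theorem semiconjBy_cfc_one_sub_star_mul_self (c : A) {f : ℝ → ℝ} (hf : Continuous f) :
    SemiconjBy c (cfc f (1 - star c * c)) (cfc f (1 - c * star c)) :=
  SemiconjBy.cfc_real (by simp only [SemiconjBy]; noncomm_ring)
    ((IsSelfAdjoint.one A).sub (.star_mul_self c)) ((IsSelfAdjoint.one A).sub (.mul_star_self c)) hf

variable [PartialOrder A] [StarOrderedRing A]

theorem one_sub_star_mul_self_nonneg {c : A} (hc : ‖c‖ ≤ 1) : 0 ≤ 1 - star c * c := by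
  rw [sub_nonneg, ← CStarAlgebra.norm_le_one_iff_of_nonneg _ (star_mul_self_nonneg c),
    CStarRing.norm_star_mul_self]
  exact mul_le_one₀ hc (norm_nonneg c) hc

theorem one_sub_mul_star_self_nonneg {c : A} (hc : ‖c‖ ≤ 1) : 0 ≤ 1 - c * star c := by
  simpa using one_sub_star_mul_self_nonneg (c := star c) (by rwa [norm_star])

theorem cfc_sqrt_mul_self {a : A} (ha : 0 ≤ a) : cfc Real.sqrt a * cfc Real.sqrt a = a := by
  rw [← cfc_mul Real.sqrt Real.sqrt a, cfc_congr (f := fun x ↦ √x * √x) (g := id) fun x hx ↦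
    Real.mul_self_sqrt (spectrum_nonneg_of_nonneg ha hx), cfc_id ℝ a]

end CStarAlgebra

section BlockMatrix

variable {R : Type*} [Ring R]

theorem Matrix.half_smul_add_half_smul_conj_diag_sign [Module ℝ R]
    (X : Matrix (Fin 2) (Fin 2) R) :
    (2 : ℝ)⁻¹ • X + (2 : ℝ)⁻¹ • (!![1, 0; 0, -1] * X * !![1, 0; 0, -1]) =
      !![X 0 0, 0; 0, X 1 1] := by
  rw [Matrix.eta_fin_two X]
  norm_num [← add_smul]

variable [StarRing R]

theorem Matrix.star_fin_two (a b c d : R) :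
    star !![a, b; c, d] = !![star a, star c; star b, star d] := by
  ext i j; fin_cases i <;> fin_cases j <;> rfl

theorem Matrix.julia_mem_unitary {c d e : R} (hd : IsSelfAdjoint d) (he : IsSelfAdjoint e)
    (hce : c * e = d * c) (hc : star c * c + e * e = 1) (hc' : c * star c + d * d = 1) :
    !![c, d; e, -star c] ∈ unitary (Matrix (Fin 2) (Fin 2) R) := by
  have hce' : star c * d = e * star c := by
    simpa only [star_mul, hd.star_eq, he.star_eq] using (congrArg star hce).symm
  rw [Unitary.mem_iff, Matrix.star_fin_two, Matrix.mul_fin_two, Matrix.mul_fin_two,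
    Matrix.one_fin_two]
  simp only [hd.star_eq, he.star_eq, star_neg, star_star, mul_neg, neg_mul, neg_neg, hce, hce',
    add_neg_cancel]
  rw [add_comm (d * d), add_comm (e * e), hc, hc']
  exact ⟨rfl, rfl⟩

theorem Matrix.diag_sign_mem_unitary :
    !![(1 : R), 0; 0, -1] ∈ unitary (Matrix (Fin 2) (Fin 2) R) := by
  rw [Unitary.mem_iff, Matrix.star_fin_two, Matrix.mul_fin_two, Matrix.one_fin_two]
  simp

end BlockMatrix

/-- For a contraction `C` on a complex Hilbert space `K`, with
`D = (1 - CC*)^{1/2}` and `E = (1 - C*C)^{1/2}`, the block matrices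
`U = [[C, D],[E, -C*]]` and `V = [[C, -D],[E, C*]]` (acting on `K ⊕ K`, here
realized as `2×2` matrices over the operator algebra `B(K)`) are unitary, and
`(1/2) U* [[A,0],[0,0]] U + (1/2) V* [[A,0],[0,0]] V = [[C*AC, 0],[0, DAD]]`
for every bounded operator `A` on `K`. -/
theorem block_unitaries_average {K : Type*} [NormedAddCommGroup K]
    [InnerProductSpace ℂ K] [CompleteSpace K]
    (C : K →L[ℂ] K) (hC : ‖C‖ ≤ 1)
    (D E : K →L[ℂ] K)
    (hD : D = cfc Real.sqrt (1 - C * star C))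
    (hE : E = cfc Real.sqrt (1 - star C * C))
    (U V : Matrix (Fin 2) (Fin 2) (K →L[ℂ] K))
    (hU : U = !![C, D; E, -star C])
    (hV : V = !![C, -D; E, star C]) :
    U ∈ unitary (Matrix (Fin 2) (Fin 2) (K →L[ℂ] K)) ∧
    V ∈ unitary (Matrix (Fin 2) (Fin 2) (K →L[ℂ] K)) ∧
    ∀ A : K →L[ℂ] K,
      (2 : ℝ)⁻¹ • (star U * !![A, 0; 0, 0] * U) + (2 : ℝ)⁻¹ • (star V * !![A, 0; 0, 0] * V) =
        !![star C * A * C, 0; 0, D * A * D] := by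
  have hDD : D * D = 1 - C * star C := hD ▸ cfc_sqrt_mul_self (one_sub_mul_star_self_nonneg hC)
  have hEE : E * E = 1 - star C * C := hE ▸ cfc_sqrt_mul_self (one_sub_star_mul_self_nonneg hC)
  have hCE : C * E = D * C :=
    hD ▸ hE ▸ semiconjBy_cfc_one_sub_star_mul_self C Real.continuous_sqrt
  have hDsa : IsSelfAdjoint D := hD ▸ cfc_predicate _ _
  have hUu : U ∈ unitary _ := hU ▸ Matrix.julia_mem_unitary hDsa (hE ▸ cfc_predicate _ _) hCE
    (by rw [hEE]; abel) (by rw [hDD]; abel)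
  set J : Matrix (Fin 2) (Fin 2) (K →L[ℂ] K) := !![1, 0; 0, -1]
  have hVU : V = U * J := by rw [hU, hV, Matrix.mul_fin_two]; simp
  refine ⟨hUu, hVU ▸ mul_mem hUu Matrix.diag_sign_mem_unitary, fun A => ?_⟩
  have hconj : star V * !![A, 0; 0, 0] * V = J * (star U * !![A, 0; 0, 0] * U) * J := by
    rw [hVU, star_mul, show star J = J by simp [J, Matrix.star_fin_two]]
    simp only [mul_assoc]
  rw [hconj, Matrix.half_smul_add_half_smul_conj_diag_sign, hU, Matrix.star_fin_two]
  simp [hDsa.star_eq]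
end

section
/- Let g be a continuous real function defined on an open interval I ⊆ ℝ. Then the functional calculus X ↦ g(X) is strongly continuous on norm-bounded subsets of bounded self-adjoint operators with spectra contained in a fixed compact subset of I: if (X_i) is a norm-bounded net of bounded self-adjoint operators with spectra in a compact subset K of I converging in the strong operator topology to a self-adjoint operator X with spectrum in K, then g(X_i) converges to g(X) in the strong operator topology. -/
/-!
Approximate `g` uniformly on `K` by a polynomial `p` (Stone–Weierstrass). Since every spectrum
lies in `K`, the isometric functional calculus gives `‖g(Y) - p(Y)‖ ≤ sup_K |g - p|` uniformly in
`Y`, while `p(X_i) → p(X)` strongly because operator multiplication is jointly strongly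
continuous on norm-bounded sets. An `ε/3` argument concludes.
-/

open Filter Polynomial Topology

theorem tendsto_of_forall_dist_le_of_tendsto {α ι : Type*} [PseudoMetricSpace α] {l : Filter ι}
    {u : ι → α} {a : α}
    (h : ∀ ε > 0, ∃ (v : ι → α) (b : α), Tendsto v l (𝓝 b) ∧ (∀ i, dist (u i) (v i) ≤ ε) ∧
      dist b a ≤ ε) :
    Tendsto u l (𝓝 a) := by
  refine Metric.tendsto_nhds.2 fun ε hε => ?_
  obtain ⟨v, b, hv, huv, hba⟩ := h (ε / 3) (by positivity)
  filter_upwards [Metric.tendsto_nhds.1 hv (ε / 3) (by positivity)] with i hvb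
  calc dist (u i) a ≤ dist (u i) (v i) + dist (v i) b + dist b a := dist_triangle4 _ _ _ _
    _ < ε := by linarith [huv i]

theorem exists_polynomial_near_of_continuousOn_of_isCompact {K : Set ℝ} (hK : IsCompact K)
    {g : ℝ → ℝ} (hg : ContinuousOn g K) {ε : ℝ} (hε : 0 < ε) :
    ∃ p : ℝ[X], ∀ x ∈ K, |p.eval x - g x| ≤ ε := by
  have : CompactSpace K := isCompact_iff_compactSpace.mp hK
  let f : C(K, ℝ) := ⟨K.domRestrict g, hg.domRestrict⟩
  have hf : f ∈ (polynomialFunctions K).topologicalClosure := by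
    rw [polynomialFunctions.topologicalClosure]; trivial
  obtain ⟨-, ⟨p, -, rfl⟩, hfp⟩ := Metric.mem_closure_iff.1 hf ε hε
  refine ⟨p, fun x hx => ?_⟩
  rw [dist_comm, dist_eq_norm, ContinuousMap.norm_lt_iff _ hε] at hfp
  exact (hfp ⟨x, hx⟩).le

section StrongConvergence

variable {𝕜 E ι : Type*} [NontriviallyNormedField 𝕜] [SeminormedAddCommGroup E]
  [NormedSpace 𝕜 E] {l : Filter ι}

theorem tendsto_mul_apply_of_norm_le {A B : ι → E →L[𝕜] E} {A₀ B₀ : E →L[𝕜] E} {M : ℝ}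
    (hM : ∀ i, ‖A i‖ ≤ M) (hA : ∀ ξ, Tendsto (fun i => A i ξ) l (𝓝 (A₀ ξ)))
    (hB : ∀ ξ, Tendsto (fun i => B i ξ) l (𝓝 (B₀ ξ))) (ξ : E) :
    Tendsto (fun i => (A i * B i) ξ) l (𝓝 ((A₀ * B₀) ξ)) := by
  rw [tendsto_iff_norm_sub_tendsto_zero]
  have hdecomp : ∀ i, (A i * B i) ξ - (A₀ * B₀) ξ = A i (B i ξ - B₀ ξ) + (A i (B₀ ξ) - A₀ (B₀ ξ)) :=
    fun i => by simp only [mul_apply_eq_comp, map_sub]; abel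
  have hbound : ∀ i, ‖(A i * B i) ξ - (A₀ * B₀) ξ‖ ≤
      M * ‖B i ξ - B₀ ξ‖ + ‖A i (B₀ ξ) - A₀ (B₀ ξ)‖ := fun i =>
    calc ‖(A i * B i) ξ - (A₀ * B₀) ξ‖
        ≤ ‖A i (B i ξ - B₀ ξ)‖ + ‖A i (B₀ ξ) - A₀ (B₀ ξ)‖ := hdecomp i ▸ norm_add_le _ _
      _ ≤ M * ‖B i ξ - B₀ ξ‖ + ‖A i (B₀ ξ) - A₀ (B₀ ξ)‖ := by
        gcongr
        exact (A i).le_of_opNorm_le (hM i) _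
  have hlim := ((tendsto_iff_norm_sub_tendsto_zero.1 (hB ξ)).const_mul M).add
    (tendsto_iff_norm_sub_tendsto_zero.1 (hA (B₀ ξ)))
  rw [mul_zero, add_zero] at hlim
  exact squeeze_zero (fun _ => norm_nonneg _) hbound hlim

theorem tendsto_pow_apply_of_norm_le {X : ι → E →L[𝕜] E} {X₀ : E →L[𝕜] E} {M : ℝ}
    (hM : ∀ i, ‖X i‖ ≤ M) (hX : ∀ ξ, Tendsto (fun i => X i ξ) l (𝓝 (X₀ ξ))) (n : ℕ) (ξ : E) :
    Tendsto (fun i => (X i ^ n) ξ) l (𝓝 ((X₀ ^ n) ξ)) := by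
  induction n generalizing ξ with
  | zero => simpa using tendsto_const_nhds
  | succ n ih => simpa only [pow_succ'] using tendsto_mul_apply_of_norm_le hM hX ih ξ

theorem tendsto_aeval_apply_of_norm_le {R : Type*} [CommSemiring R] [Algebra R (E →L[𝕜] E)]
    {X : ι → E →L[𝕜] E} {X₀ : E →L[𝕜] E} {M : ℝ} (hM : ∀ i, ‖X i‖ ≤ M)
    (hX : ∀ ξ, Tendsto (fun i => X i ξ) l (𝓝 (X₀ ξ))) (p : R[X]) (ξ : E) :
    Tendsto (fun i => aeval (X i) p ξ) l (𝓝 (aeval X₀ p ξ)) := by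
  induction p using Polynomial.induction_on' generalizing ξ with
  | add p q hp hq =>
    simpa only [map_add, add_apply] using (hp ξ).add (hq ξ)
  | monomial n c =>
    simp only [aeval_monomial]
    exact tendsto_mul_apply_of_norm_le (fun _ => le_rfl) (fun _ => tendsto_const_nhds)
      (tendsto_pow_apply_of_norm_le hM hX n) ξ

end StrongConvergence

theorem norm_cfc_sub_aeval_le {A : Type*} [CStarAlgebra A] {a : A} (ha : IsSelfAdjoint a)
    {g : ℝ → ℝ} (hg : ContinuousOn g (spectrum ℝ a)) {p : ℝ[X]} {δ : ℝ} (hδ : 0 ≤ δ)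
    (hp : ∀ x ∈ spectrum ℝ a, |p.eval x - g x| ≤ δ) :
    ‖cfc g a - aeval a p‖ ≤ δ := by
  rw [← cfc_polynomial p a, ← cfc_sub g (fun x => p.eval x) a]
  exact norm_cfc_le hδ fun x hx => by rw [Real.norm_eq_abs, abs_sub_comm]; exact hp x hx

open Filter in
theorem cfc_strongly_continuous_general {H : Type*} [NormedAddCommGroup H]
    [InnerProductSpace ℂ H] [CompleteSpace H]
    (I : Set ℝ)
    (g : ℝ → ℝ) (hg : ContinuousOn g I)
    (K : Set ℝ) (hK : IsCompact K) (hKI : K ⊆ I)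
    {ι : Type*} (l : Filter ι) (X : ι → (H →L[ℂ] H)) (Xlim : H →L[ℂ] H)
    (hsa : ∀ i, IsSelfAdjoint (X i)) (hsaX : IsSelfAdjoint Xlim)
    (hspec : ∀ i, spectrum ℝ (X i) ⊆ K) (hspecX : spectrum ℝ Xlim ⊆ K)
    (hbdd : ∃ M : ℝ, ∀ i, ‖X i‖ ≤ M)
    (hconv : ∀ ξ : H, Tendsto (fun i => X i ξ) l (nhds (Xlim ξ))) :
    ∀ ξ : H, Tendsto (fun i => cfc g (X i) ξ) l (nhds (cfc g Xlim ξ)) := by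
  intro ξ
  obtain ⟨M, hM⟩ := hbdd
  refine tendsto_of_forall_dist_le_of_tendsto fun ε hε => ?_
  set δ := ε / (‖ξ‖ + 1)
  have hδ : 0 < δ := by positivity
  have hδξ : δ * ‖ξ‖ ≤ ε := by
    rw [div_mul_eq_mul_div, div_le_iff₀ (by positivity)]
    gcongr
    linarith
  obtain ⟨p, hp⟩ := exists_polynomial_near_of_continuousOn_of_isCompact hK (hg.mono hKI) hδ
  have happrox : ∀ Y : H →L[ℂ] H, IsSelfAdjoint Y → spectrum ℝ Y ⊆ K →
      dist (cfc g Y ξ) (aeval Y p ξ) ≤ ε := fun Y hY hYK =>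
    calc dist (cfc g Y ξ) (aeval Y p ξ) = ‖(cfc g Y - aeval Y p) ξ‖ := dist_eq_norm _ _
      _ ≤ δ * ‖ξ‖ := (cfc g Y - aeval Y p).le_of_opNorm_le (norm_cfc_sub_aeval_le hY
          ((hg.mono hKI).mono hYK) hδ.le fun x hx => hp x (hYK hx)) ξ
      _ ≤ ε := hδξ
  exact ⟨_, _, tendsto_aeval_apply_of_norm_le hM hconv p ξ,
    fun i => happrox _ (hsa i) (hspec i), dist_comm (cfc g Xlim ξ) _ ▸ happrox _ hsaX hspecX⟩

open Filter in
/-- For a continuous real function `g` on an open interval `I`, the continuous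
functional calculus `X ↦ g(X)` is strongly continuous on norm-bounded sets of
self-adjoint operators with spectra contained in a fixed compact subset `K ⊆ I`:
if a norm-bounded net of self-adjoint operators with spectra in `K` converges
strongly to a self-adjoint operator with spectrum in `K`, then the images under
`g` converge strongly as well. -/
theorem cfc_strongly_continuous {H : Type*} [NormedAddCommGroup H]
    [InnerProductSpace ℂ H] [CompleteSpace H]
    (I : Set ℝ) (hIopen : IsOpen I) (hIconn : I.OrdConnected)
    (g : ℝ → ℝ) (hg : ContinuousOn g I)
    (K : Set ℝ) (hK : IsCompact K) (hKI : K ⊆ I)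
    {ι : Type*} (l : Filter ι) (X : ι → (H →L[ℂ] H)) (Xlim : H →L[ℂ] H)
    (hsa : ∀ i, IsSelfAdjoint (X i)) (hsaX : IsSelfAdjoint Xlim)
    (hspec : ∀ i, spectrum ℝ (X i) ⊆ K) (hspecX : spectrum ℝ Xlim ⊆ K)
    (hbdd : ∃ M : ℝ, ∀ i, ‖X i‖ ≤ M)
    (hconv : ∀ ξ : H, Tendsto (fun i => X i ξ) l (nhds (Xlim ξ))) :
    ∀ ξ : H, Tendsto (fun i => cfc g (X i) ξ) l (nhds (cfc g Xlim ξ)) :=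
  cfc_strongly_continuous_general I g hg K hK hKI l X Xlim hsa hsaX hspec hspecX hbdd hconv
end
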